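/- Let $d \geq 2$ be an integer, let $F$ be a field whose characteristic does not divide $d$, let $c \in F$, set $f := x^d - c$, and suppose there is a positive integer $n_0$ such that $f^{n_0}(0) = 0$. Let $\beta$ be an element of $F$. Then in an algebraic closure $\bar{F}$ of $F$ there exist elements $\gamma_1, \ldots, \gamma_{d^{n_0 - 1}}$ such that $f^{n_0}(\gamma_j) = \beta$ for each $j$, the polynomial factorization $f^{n_0} - \beta = \prod_{j=1}^{d^{n_0-1}} (x^d - \gamma_j^d)$ holds in $\bar{F}[x]$, and consequently $-\beta = (-1)^{d^{n_0 - 1}} \cdot (\gamma_1 \cdots \gamma_{d^{n_0-1}})^d$. -/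

import Mathlib

open Polynomial

/-!
Write `f = X ^ d - c`, so that `f^[n₀] - β = (f^[n₀ - 1] - β) ∘ f`. Over the algebraic closure the
monic polynomial `f^[n₀ - 1] - β` of degree `d ^ (n₀ - 1)` splits as `∏ (X - r_j)`, and choosing
`γ_j` with `γ_j ^ d = r_j + c` turns each factor `f - r_j` into `X ^ d - γ_j ^ d`. Evaluating this
factorization at `γ_j` gives `f^[n₀] (γ_j) = β`, and evaluating it at `0`, where `f^[n₀]` vanishes,
gives the formula for `-β`.
-/

/-- The `N`-th iterate of a polynomial under composition, with `f^0 = X`. -/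
noncomputable def polyIter {K : Type*} [CommRing K] (f : Polynomial K) : ℕ → Polynomial K
  | 0 => Polynomial.X
  | n + 1 => (polyIter f n).comp f

section PolyIter

variable {R S : Type*} [CommRing R] [CommRing S]

theorem polyIter_map (φ : R →+* S) (f : R[X]) (n : ℕ) :
    (polyIter f n).map φ = polyIter (f.map φ) n := by
  induction n with
  | zero => simp [polyIter]
  | succ n ih => simp [polyIter, map_comp, ih]

theorem eval_polyIter (f : R[X]) (n : ℕ) (x : R) :
    (polyIter f n).eval x = (f.eval ·)^[n] x := by
  induction n generalizing x with
  | zero => simp [polyIter]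
  | succ n ih => simp [polyIter, eval_comp, ih, Function.iterate_succ_apply]

theorem monic_polyIter {f : R[X]} (hf : f.Monic) (hdeg : f.natDegree ≠ 0) (n : ℕ) :
    (polyIter f n).Monic := by
  induction n with
  | zero => exact monic_X
  | succ n ih => exact ih.comp hf hdeg

theorem natDegree_polyIter [IsDomain R] (f : R[X]) (n : ℕ) :
    (polyIter f n).natDegree = f.natDegree ^ n := by
  induction n with
  | zero => simp [polyIter]
  | succ n ih => rw [polyIter, natDegree_comp, ih, pow_succ]

end PolyIter

theorem eval_zero_prod_X_pow_sub_C_pow {R ι : Type*} [CommRing R] [Fintype ι] {d : ℕ} (hd : d ≠ 0)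
    (γ : ι → R) :
    (∏ i, (X ^ d - C (γ i ^ d))).eval 0 = (-1) ^ Fintype.card ι * (∏ i, γ i) ^ d := by
  rw [eval_prod, ← Finset.prod_pow, ← Finset.card_univ, ← Finset.prod_const,
    ← Finset.prod_mul_distrib]
  simp [zero_pow hd]

section IsAlgClosed

variable {K : Type*} [Field K] [IsAlgClosed K]

theorem Polynomial.Monic.exists_fin_prod_X_sub_C {p : K[X]} (hp : p.Monic) {n : ℕ}
    (hn : p.natDegree = n) :
    ∃ r : Fin n → K, p = ∏ i, (X - C (r i)) := by
  set l := p.roots.toList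
  have hlen : n = l.length := by
    rw [Multiset.length_toList, ← hn, splits_iff_card_roots.mp (IsAlgClosed.splits p)]
  refine ⟨fun i => l[(i.cast hlen).1], ?_⟩
  rw [Fin.prod_congr' (fun i : Fin l.length => X - C l[i.1]) hlen,
    Fin.prod_univ_fun_getElem l (fun x => X - C x), ← Multiset.prod_coe, ← Multiset.map_coe, Multiset.coe_toList]
  exact (IsAlgClosed.splits p).eq_prod_roots_of_monic hp

theorem Polynomial.Monic.exists_comp_X_pow_sub_C_eq_prod {p : K[X]} (hp : p.Monic) {n : ℕ}
    (hn : p.natDegree = n) {d : ℕ} (hd : d ≠ 0) (a : K) :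
    ∃ γ : Fin n → K, p.comp (X ^ d - C a) = ∏ i, (X ^ d - C (γ i ^ d)) := by
  obtain ⟨r, rfl⟩ := hp.exists_fin_prod_X_sub_C hn
  choose γ hγ using fun i => IsAlgClosed.exists_pow_nat_eq (r i + a) (Nat.pos_of_ne_zero hd)
  refine ⟨γ, ?_⟩
  rw [prod_comp]
  refine Finset.prod_congr rfl fun i _ => ?_
  rw [sub_comp, X_comp, C_comp, hγ, C_add, sub_sub, add_comm]

end IsAlgClosed

theorem stmt7_general (d : ℕ) (hd : 2 ≤ d) (F : Type*) [Field F]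
    (c : F) (n₀ : ℕ) (hn₀ : 1 ≤ n₀)
    (hper : (fun x : F => x ^ d - c)^[n₀] 0 = 0)
    (β : F) :
    ∃ γ : Fin (d ^ (n₀ - 1)) → AlgebraicClosure F,
      (∀ j, Polynomial.aeval (γ j) (polyIter (X ^ d - Polynomial.C c) n₀) =
        algebraMap F (AlgebraicClosure F) β) ∧
      (polyIter (X ^ d - Polynomial.C c) n₀ - Polynomial.C β).map
          (algebraMap F (AlgebraicClosure F)) =
        ∏ j : Fin (d ^ (n₀ - 1)), (X ^ d - Polynomial.C ((γ j) ^ d)) ∧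
      algebraMap F (AlgebraicClosure F) (-β) =
        (-1 : AlgebraicClosure F) ^ (d ^ (n₀ - 1)) * (∏ j : Fin (d ^ (n₀ - 1)), γ j) ^ d := by
  obtain ⟨m, rfl⟩ : ∃ m, n₀ = m + 1 := ⟨n₀ - 1, by omega⟩
  rw [Nat.add_sub_cancel]
  set φ := algebraMap F (AlgebraicClosure F)
  have hd0 : d ≠ 0 := by omega
  have hf : (X ^ d - C (φ c)).Monic := monic_X_pow_sub_C _ hd0
  have hfdeg : (X ^ d - C (φ c)).natDegree = d := natDegree_X_pow_sub_C
  have hgm := monic_polyIter hf (hfdeg.symm ▸ hd0) m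
  have hgdeg := natDegree_polyIter (X ^ d - C (φ c)) m
  have hp : (polyIter (X ^ d - C (φ c)) m - C (φ β)).Monic :=
    hgm.sub_of_left (degree_C_le.trans_lt (by
      rw [degree_eq_natDegree hgm.ne_zero, hgdeg, hfdeg]; exact_mod_cast pow_pos (by omega) m))
  obtain ⟨γ, hγ⟩ := hp.exists_comp_X_pow_sub_C_eq_prod (by rw [natDegree_sub_C, hgdeg, hfdeg])
    hd0 (φ c)
  have hfactor : (polyIter (X ^ d - C c) (m + 1) - C β).map φ =
      ∏ j, (X ^ d - C (γ j ^ d)) := by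
    rw [Polynomial.map_sub, polyIter_map, Polynomial.map_C, ← hγ, sub_comp, C_comp]
    simp [polyIter, φ]
  refine ⟨γ, fun j => ?_, hfactor, ?_⟩
  · have hzero := congrArg (eval (γ j)) hfactor
    rw [eval_prod, Finset.prod_eq_zero (Finset.mem_univ j) (by simp)] at hzero
    rwa [Polynomial.map_sub, eval_sub, eval_map_algebraMap, map_C, eval_C, sub_eq_zero] at hzero
  · have hconst := congrArg (eval 0) hfactor
    rw [eval_zero_prod_X_pow_sub_C_pow hd0, Fintype.card_fin, eval_zero_map, eval_sub,
      eval_polyIter] at hconst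
    simpa [hper] using hconst

theorem stmt7 (d : ℕ) (hd : 2 ≤ d) (F : Type*) [Field F] (hchar : (d : F) ≠ 0)
    (c : F) (n₀ : ℕ) (hn₀ : 1 ≤ n₀)
    (hper : (fun x : F => x ^ d - c)^[n₀] 0 = 0)
    (β : F) :
    ∃ γ : Fin (d ^ (n₀ - 1)) → AlgebraicClosure F,
      (∀ j, Polynomial.aeval (γ j) (polyIter (X ^ d - Polynomial.C c) n₀) =
        algebraMap F (AlgebraicClosure F) β) ∧
      (polyIter (X ^ d - Polynomial.C c) n₀ - Polynomial.C β).map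
          (algebraMap F (AlgebraicClosure F)) =
        ∏ j : Fin (d ^ (n₀ - 1)), (X ^ d - Polynomial.C ((γ j) ^ d)) ∧
      algebraMap F (AlgebraicClosure F) (-β) =
        (-1 : AlgebraicClosure F) ^ (d ^ (n₀ - 1)) * (∏ j : Fin (d ^ (n₀ - 1)), γ j) ^ d :=
  stmt7_general d hd F c n₀ hn₀ hper β
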